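/- arXiv:2503.22653 — 5 statements merged into one kernel-verified Lean document; each statement's English description precedes it below -/
import Mathlib

section
/- Fix b in R^{d+1} and indices i ≠ j, k ≠ l in [d+1]. If the system S_{i,j,k,l}(b), consisting of the equation x_i - x_j = x_k - b_k - x_l + b_l together with the inequalities x_i - x_j ≥ x_m - x_n for all m, n and x_k - b_k - x_l + b_l ≥ x_m - b_m - x_n + b_n for all m, n, has a solution x in R^{d+1}, then b_j ≤ b_i, b_k ≤ b_l, and b_k ≤ b_i. -/
def Sset {d : ℕ} (b : Fin (d+1) → ℝ) (i j k l : Fin (d+1)) : Set (Fin (d+1) → ℝ) :=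
  {x | x i - x j = x k - b k - x l + b l ∧
       (∀ m n : Fin (d+1), x i - x j ≥ x m - x n) ∧
       (∀ m n : Fin (d+1), x k - b k - x l + b l ≥ x m - b m - x n + b n)}

theorem stmt3_general {d : ℕ} (b : Fin (d+1) → ℝ) (i j k l : Fin (d+1))
    (h : (Sset b i j k l).Nonempty) :
    b j ≤ b i ∧ b k ≤ b l ∧ b k ≤ b i := by
  obtain ⟨x, hEq, hMax, hMaxShifted⟩ := h
  refine ⟨?_, ?_, ?_⟩
  · linarith [hMaxShifted i j]
  · linarith [hMax k l]
  · linarith [hMaxShifted i l, hMax k j]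

theorem stmt3 {d : ℕ} (b : Fin (d+1) → ℝ) (i j k l : Fin (d+1))
    (hij : i ≠ j) (hkl : k ≠ l) (h : (Sset b i j k l).Nonempty) :
    b j ≤ b i ∧ b k ≤ b l ∧ b k ≤ b i :=
  stmt3_general b i j k l h
end

section
/- Fix b in R^{d+1} and indices i ≠ j, k with k ≠ i. If the system S_{i,j,k,i}(b) is nonempty, then b_i = max_m b_m and b_j ≥ 2·b_k - b_i. -/
section Sset

variable {d : ℕ} {b x : Fin (d+1) → ℝ} {i j k l : Fin (d+1)}

theorem apply_le_of_mem_Sset (hx : x ∈ Sset b i j k l) (m : Fin (d+1)) : x m ≤ x i := by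
  linarith [hx.2.1 m j]

theorem apply_sub_le_of_mem_Sset (hx : x ∈ Sset b i j k l) (m : Fin (d+1)) :
    x m - b m ≤ x k - b k := by
  linarith [hx.2.2 m l]

theorem sub_apply_le_of_mem_Sset (hx : x ∈ Sset b i j k l) (m : Fin (d+1)) :
    b m - x m ≤ b l - x l := by
  linarith [hx.2.2 k m]

end Sset

theorem stmt4_general {d : ℕ} (b : Fin (d+1) → ℝ) (i j k : Fin (d+1))
    (h : (Sset b i j k i).Nonempty) :
    (∀ m : Fin (d+1), b m ≤ b i) ∧ b j ≥ 2 * b k - b i := by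
  obtain ⟨x, hx⟩ := h
  refine ⟨fun m => ?_, ?_⟩
  · linarith [apply_le_of_mem_Sset hx m, sub_apply_le_of_mem_Sset hx m]
  · -- b j ≥ x j - x k + b k = 2 (x i - x k) + 2 b k - b i, using the defining equation
    linarith [hx.1, apply_sub_le_of_mem_Sset hx j, apply_le_of_mem_Sset hx k]

theorem stmt4 {d : ℕ} (b : Fin (d+1) → ℝ) (i j k : Fin (d+1))
    (hij : i ≠ j) (hki : k ≠ i) (h : (Sset b i j k i).Nonempty) :
    (∀ m : Fin (d+1), b m ≤ b i) ∧ b j ≥ 2 * b k - b i :=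
  stmt4_general b i j k h
end

section
/- Fix b in R^{d+1} and indices i ≠ j, l with l ≠ j. If the system S_{i,j,j,l}(b) is nonempty, then b_j = min_m b_m and b_j ≤ 2·b_l - b_i. -/
namespace Sset

variable {d : ℕ} {b x : Fin (d+1) → ℝ} {i j k l : Fin (d+1)}

theorem apply_j_le (hx : x ∈ Sset b i j k l) (m : Fin (d+1)) : x j ≤ x m := by
  linarith [hx.2.1 i m]

theorem sub_apply_le_k (hx : x ∈ Sset b i j k l) (m : Fin (d+1)) :
    x m - b m ≤ x k - b k := by
  linarith [hx.2.2 m l]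

theorem sub_apply_l_le (hx : x ∈ Sset b i j k l) (m : Fin (d+1)) :
    x l - b l ≤ x m - b m := by
  linarith [hx.2.2 k m]

end Sset

theorem stmt5_general {d : ℕ} (b : Fin (d+1) → ℝ) (i j l : Fin (d+1))
    (h : (Sset b i j j l).Nonempty) :
    (∀ m : Fin (d+1), b j ≤ b m) ∧ b j ≤ 2 * b l - b i := by
  obtain ⟨x, hx⟩ := h
  refine ⟨fun m => ?_, ?_⟩
  · linarith [Sset.apply_j_le hx m, Sset.sub_apply_le_k hx m]
  · have hxj_le_xl := Sset.apply_j_le hx l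
    have hl_le_i := Sset.sub_apply_l_le hx i
    linarith [hx.1]

theorem stmt5 {d : ℕ} (b : Fin (d+1) → ℝ) (i j l : Fin (d+1))
    (hij : i ≠ j) (hjl : j ≠ l) (h : (Sset b i j j l).Nonempty) :
    (∀ m : Fin (d+1), b j ≤ b m) ∧ b j ≤ 2 * b l - b i :=
  stmt5_general b i j l h
end

section
/- For b in R^{d+1} and i ≠ j, the set S_{i,j,j,i}(b) is nonempty if and only if b_i = max_m b_m and b_j = min_m b_m. Moreover, when these conditions hold, the point x = (1/2)·b lies in S_{i,j,j,i}(b). -/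
namespace Sset

variable {d : ℕ} {b x : Fin (d+1) → ℝ} {i j : Fin (d+1)}

theorem apply_le_of_mem_swap (hx : x ∈ Sset b i j j i) (m : Fin (d+1)) : b m ≤ b i := by
  obtain ⟨-, hxmax, hymax⟩ := hx
  linarith [hxmax m j, hymax j m]

theorem le_apply_of_mem_swap (hx : x ∈ Sset b i j j i) (m : Fin (d+1)) : b j ≤ b m := by
  obtain ⟨-, hxmax, hymax⟩ := hx
  linarith [hxmax i m, hymax m i]

theorem half_mem_swap (hi : ∀ m, b m ≤ b i) (hj : ∀ m, b j ≤ b m) :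
    (fun m => (1/2 : ℝ) * b m) ∈ Sset b i j j i :=
  ⟨by ring, fun m n => by linarith [hi m, hj n], fun m n => by linarith [hi n, hj m]⟩

end Sset

theorem stmt6_general {d : ℕ} (b : Fin (d+1) → ℝ) (i j : Fin (d+1)) :
    ((Sset b i j j i).Nonempty ↔
      (∀ m : Fin (d+1), b m ≤ b i) ∧ (∀ m : Fin (d+1), b j ≤ b m)) ∧
    ((∀ m : Fin (d+1), b m ≤ b i) → (∀ m : Fin (d+1), b j ≤ b m) →
      (fun m => (1/2 : ℝ) * b m) ∈ Sset b i j j i) :=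
  ⟨⟨fun ⟨_, hx⟩ => ⟨Sset.apply_le_of_mem_swap hx, Sset.le_apply_of_mem_swap hx⟩,
    fun ⟨hi, hj⟩ => ⟨_, Sset.half_mem_swap hi hj⟩⟩, Sset.half_mem_swap⟩

theorem stmt6 {d : ℕ} (b : Fin (d+1) → ℝ) (i j : Fin (d+1)) (hij : i ≠ j) :
    ((Sset b i j j i).Nonempty ↔
      (∀ m : Fin (d+1), b m ≤ b i) ∧ (∀ m : Fin (d+1), b j ≤ b m)) ∧
    ((∀ m : Fin (d+1), b m ≤ b i) → (∀ m : Fin (d+1), b j ≤ b m) →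
      (fun m => (1/2 : ℝ) * b m) ∈ Sset b i j j i) :=
  stmt6_general b i j
end

section
/- Let b in R^{d+1} have b_1 = min_m b_m and b_{d+1} = max_m b_m, with all coordinates of b distinct, and let m, n be indices with b_n < b_m. Then S_{m,1,1,n}(b) and S_{d+1,m,n,d+1}(b) cannot both be nonempty. -/
theorem neg_mem_Sset {d : ℕ} {b x : Fin (d+1) → ℝ} {i j k l : Fin (d+1)}
    (hx : x ∈ Sset b i j k l) : -x ∈ Sset (-b) j i l k := by
  obtain ⟨heq, hxmax, hzmax⟩ := hx
  refine ⟨?_, fun p q => ?_, fun p q => ?_⟩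
  · simp only [Pi.neg_apply]
    linarith
  · simp only [Pi.neg_apply]
    linarith [hxmax q p]
  · simp only [Pi.neg_apply]
    linarith [hzmax q p]

theorem add_le_two_mul_of_mem_Sset {d : ℕ} {b x : Fin (d+1) → ℝ} {m i n : Fin (d+1)}
    (hx : x ∈ Sset b m i i n) (j : Fin (d+1)) :
    b i + b j ≤ 2 * b n ∧ b i + b j ≤ 2 * b m := by
  obtain ⟨heq, hxmax, hzmax⟩ := hx
  have hin : x i ≤ x n := by linarith [hxmax m n]
  have hjn : b j - b n ≤ x m - x n := by linarith [hxmax j i, hzmax i j]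
  have hmi : x m - x i ≤ b m - b i := by linarith [hzmax m n]
  constructor <;> linarith

theorem stmt10_general {d : ℕ} (b : Fin (d+1) → ℝ)
    (m n : Fin (d+1)) (hnm : b n < b m) :
    ¬ ((Sset b m 0 0 n).Nonempty ∧ (Sset b (Fin.last d) m n (Fin.last d)).Nonempty) := by
  rintro ⟨⟨x, hx⟩, ⟨y, hy⟩⟩
  have hxn := (add_le_two_mul_of_mem_Sset hx (Fin.last d)).1
  have hym := (add_le_two_mul_of_mem_Sset (neg_mem_Sset hy) 0).2
  simp only [Pi.neg_apply] at hym
  linarith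

theorem stmt10 {d : ℕ} (b : Fin (d+1) → ℝ)
    (hmin : ∀ p : Fin (d+1), b 0 ≤ b p)
    (hmax : ∀ p : Fin (d+1), b p ≤ b (Fin.last d))
    (hinj : Function.Injective b)
    (m n : Fin (d+1)) (hnm : b n < b m) :
    ¬ ((Sset b m 0 0 n).Nonempty ∧ (Sset b (Fin.last d) m n (Fin.last d)).Nonempty) :=
  stmt10_general b m n hnm
end
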